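/- arXiv:1105.2618 — 4 statements merged into one kernel-verified Lean document; each statement's English description precedes it below -/
import Mathlib

section
/- Let γ > 0 and define g(ω,t) = (4/π) e^{−8γ t sin²(ω)} cos²(ω) for ω ∈ [0, π/2] and t > 0. Then √t · ∫_0^{π/2} g(ω,t) dω converges to 1/√(2πγ) as t → ∞. -/
open Real Filter Topology MeasureTheory Set

/-! Laplace's method. After the substitution `ω = u / √t` the scaled integral becomes
`∫₀^{π√t/2} e^{-a t sin²(u/√t)} h(u/√t) du`. Since `t sin²(u/√t) → u²`, the integrand
tends to `e^{-a u²} h(0)` on `u > 0`, and Jordan's inequality `sin x ≥ 2x/π` dominates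
it by a Gaussian, so dominated convergence gives the limit
`h(0) ∫₀^∞ e^{-a u²} du = h(0) √(π/a) / 2`. -/

lemma mul_intervalIntegral_eq_intervalIntegral_comp_div {E : Type*} [NormedAddCommGroup E]
    [NormedSpace ℝ E] (f : ℝ → E) {c : ℝ} (hc : c ≠ 0) (b : ℝ) :
    c • ∫ x in (0 : ℝ)..b, f x = ∫ x in (0 : ℝ)..b * c, f (x / c) := by
  rw [intervalIntegral.integral_comp_div f hc, zero_div, mul_div_cancel_right₀ b hc]

lemma tendsto_mul_sin_div_sqrt_sq (u : ℝ) :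
    Tendsto (fun t : ℝ => t * sin (u / √t) ^ 2) atTop (𝓝 (u ^ 2)) := by
  have hx : Tendsto (fun t : ℝ => u / √t) atTop (𝓝 0) :=
    tendsto_const_nhds.div_atTop tendsto_sqrt_atTop
  have hsinc := (((continuous_sinc.tendsto 0).comp hx).pow 2).const_mul (u ^ 2)
  rw [sinc_zero, one_pow, mul_one] at hsinc
  refine hsinc.congr' ?_
  filter_upwards [eventually_gt_atTop 0] with t ht
  rcases eq_or_ne u 0 with rfl | hu
  · simp
  have hst : 0 < √t := sqrt_pos.2 ht
  rw [Function.comp_apply, sinc_of_ne_zero (div_ne_zero hu hst.ne'), div_pow, div_pow,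
    sq_sqrt ht.le]
  field_simp

lemma sq_mul_le_mul_sin_div_sqrt_sq {t u : ℝ} (ht : 0 < t) (hu₀ : 0 ≤ u)
    (hu : u ≤ π / 2 * √t) :
    (2 / π * u) ^ 2 ≤ t * sin (u / √t) ^ 2 := by
  have hst : 0 < √t := sqrt_pos.2 ht
  have hjordan : 2 / π * (u / √t) ≤ sin (u / √t) :=
    mul_le_sin (by positivity) (by rwa [div_le_iff₀ hst])
  calc (2 / π * u) ^ 2 = t * (2 / π * (u / √t)) ^ 2 := by
        rw [mul_pow, mul_pow, div_pow u, sq_sqrt ht.le]; field_simp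
    _ ≤ t * sin (u / √t) ^ 2 := by gcongr

noncomputable def rescaledIntegrand (a : ℝ) (h : ℝ → ℝ) (t : ℝ) : ℝ → ℝ :=
  (Ioc 0 (π / 2 * √t)).indicator fun u => exp (-a * t * sin (u / √t) ^ 2) * h (u / √t)

section rescaledIntegrand

variable {a : ℝ} {h : ℝ → ℝ}

lemma sqrt_mul_intervalIntegral_eq_integral_rescaledIntegrand {t : ℝ} (ht : 0 < t) :
    √t * ∫ ω in (0 : ℝ)..π / 2, exp (-a * t * sin ω ^ 2) * h ω
      = ∫ u, rescaledIntegrand a h t u := by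
  rw [rescaledIntegrand, integral_indicator measurableSet_Ioc,
    ← intervalIntegral.integral_of_le (by positivity), ← smul_eq_mul,
    mul_intervalIntegral_eq_intervalIntegral_comp_div _ (sqrt_pos.2 ht).ne', mul_comm]

lemma norm_rescaledIntegrand_le (ha : 0 ≤ a) {M : ℝ} (hM : ∀ x ∈ Icc 0 (π / 2), ‖h x‖ ≤ M)
    {t : ℝ} (ht : 0 < t) (u : ℝ) :
    ‖rescaledIntegrand a h t u‖ ≤ M * exp (-(4 * a / π ^ 2) * u ^ 2) := by
  have hM₀ : 0 ≤ M := (norm_nonneg _).trans (hM 0 ⟨le_rfl, by positivity⟩)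
  by_cases hu : u ∈ Ioc 0 (π / 2 * √t)
  · have hst : 0 < √t := sqrt_pos.2 ht
    have hx : u / √t ∈ Icc 0 (π / 2) :=
      ⟨div_nonneg hu.1.le hst.le, by rw [div_le_iff₀ hst]; exact hu.2⟩
    have hexp : exp (-a * t * sin (u / √t) ^ 2) ≤ exp (-(4 * a / π ^ 2) * u ^ 2) := by
      have := mul_le_mul_of_nonneg_left (sq_mul_le_mul_sin_div_sqrt_sq ht hu.1.le hu.2) ha
      rw [exp_le_exp]
      linarith [show a * (2 / π * u) ^ 2 = 4 * a / π ^ 2 * u ^ 2 by ring]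
    rw [rescaledIntegrand, indicator_of_mem hu, norm_mul, norm_of_nonneg (exp_pos _).le, mul_comm]
    exact mul_le_mul (hM _ hx) hexp (exp_pos _).le hM₀
  · rw [rescaledIntegrand, indicator_of_notMem hu, norm_zero]
    positivity

lemma tendsto_rescaledIntegrand (hh : Continuous h) (u : ℝ) :
    Tendsto (fun t => rescaledIntegrand a h t u) atTop
      (𝓝 ((Ioi 0).indicator (fun u => exp (-a * u ^ 2) * h 0) u)) := by
  rcases le_or_gt u 0 with hu | hu
  · simp only [rescaledIntegrand, indicator_of_notMem (notMem_Ioi.2 hu),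
      indicator_of_notMem (fun h : u ∈ Ioc _ _ => hu.not_gt h.1), tendsto_const_nhds]
  have hmem : ∀ᶠ t in atTop, u ∈ Ioc 0 (π / 2 * √t) := by
    have := (tendsto_sqrt_atTop.const_mul_atTop (by positivity : (0 : ℝ) < π / 2))
    filter_upwards [this.eventually_ge_atTop u] with t ht using ⟨hu, ht⟩
  have hexp : Tendsto (fun t : ℝ => exp (-a * (t * sin (u / √t) ^ 2))) atTop
      (𝓝 (exp (-a * u ^ 2))) :=
    (continuous_exp.tendsto _).comp ((tendsto_mul_sin_div_sqrt_sq u).const_mul (-a))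
  have hh0 : Tendsto (fun t : ℝ => h (u / √t)) atTop (𝓝 (h 0)) :=
    (hh.tendsto 0).comp (tendsto_const_nhds.div_atTop tendsto_sqrt_atTop)
  rw [indicator_of_mem (mem_Ioi.2 hu)]
  refine (hexp.mul hh0).congr' ?_
  filter_upwards [hmem] with t ht
  rw [rescaledIntegrand, indicator_of_mem ht]
  simp only [mul_assoc]

end rescaledIntegrand

theorem tendsto_sqrt_mul_intervalIntegral_exp_neg_mul_sin_sq {a : ℝ} (ha : 0 < a) {h : ℝ → ℝ}
    (hh : Continuous h) :
    Tendsto (fun t : ℝ => √t * ∫ ω in (0 : ℝ)..π / 2, exp (-a * t * sin ω ^ 2) * h ω) atTop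
      (𝓝 (√(π / a) / 2 * h 0)) := by
  obtain ⟨M, hM⟩ := (isCompact_Icc (a := 0) (b := π / 2)).exists_bound_of_continuousOn
    hh.continuousOn
  have hlim := tendsto_integral_filter_of_dominated_convergence
    (fun u => M * exp (-(4 * a / π ^ 2) * u ^ 2))
    (Eventually.of_forall fun t => by
      refine ((Continuous.measurable ?_).indicator measurableSet_Ioc).aestronglyMeasurable
      fun_prop)
    ((eventually_gt_atTop 0).mono fun t ht => ae_of_all _ (norm_rescaledIntegrand_le ha.le hM ht))
    ((integrable_exp_neg_mul_sq (by positivity)).const_mul M)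
    (ae_of_all _ (tendsto_rescaledIntegrand hh))
  rw [integral_indicator measurableSet_Ioi, integral_mul_const, integral_gaussian_Ioi] at hlim
  refine hlim.congr' ?_
  filter_upwards [eventually_gt_atTop 0] with t ht
  exact (sqrt_mul_intervalIntegral_eq_integral_rescaledIntegrand ht).symm

/-- With `g(ω,t) = (4/π) e^{−8γt sin²ω} cos²ω`, one has
`√t · ∫₀^{π/2} g(ω,t) dω → 1/√(2πγ)` as `t → ∞`. -/
theorem current_correlation_decay (γ : ℝ) (hγ : 0 < γ) :
    Tendsto (fun t : ℝ => Real.sqrt t *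
        ∫ ω in (0:ℝ)..(π / 2), (4 / π) * Real.exp (-8 * γ * t * Real.sin ω ^ 2) * Real.cos ω ^ 2)
      atTop (nhds (1 / Real.sqrt (2 * π * γ))) := by
  have hlim := tendsto_sqrt_mul_intervalIntegral_exp_neg_mul_sin_sq (by positivity : 0 < 8 * γ)
    (h := fun ω => 4 / π * cos ω ^ 2) (by fun_prop)
  have hvalue : √(π / (8 * γ)) / 2 * (4 / π * cos 0 ^ 2) = 1 / √(2 * π * γ) := by
    rw [cos_zero, one_pow, mul_one,
      show π / (8 * γ) = (π / 2) ^ 2 * (2 * π * γ)⁻¹ by field_simp; norm_num,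
      sqrt_mul' _ (by positivity), sqrt_sq (by positivity), sqrt_inv]
    field_simp
    norm_num
  rw [hvalue] at hlim
  refine hlim.congr fun t => ?_
  congr 1
  refine intervalIntegral.integral_congr fun ω _ => ?_
  ring_nf
end

section
/- Let γ > 0 and g(ω,t) = (4/π) e^{−8γ t sin²(ω)} cos²(ω). Then t^{−1/2} ∫_0^t ∫_0^{π/2} g(ω,s) dω ds converges to 2/√(2πγ) as t → ∞, so the diffusivity D(t) diverges like √t. -/
/-!
Substituting `ω = u / √s` turns `√s ∫₀^{π/2} e^{-a s sin²ω} φ(ω) dω` into an integral over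
`(0, (π/2)√s]` whose integrand tends to `e^{-a u²} φ(0)`; Jordan's inequality
`sin x ≥ 2x/π` gives a Gaussian majorant, so by dominated convergence the inner integral is
`φ(0) √(π/a) / (2√s) + o(1/√s)`. Integrating an `o(1/√s)` error gives `o(√t)`, while
`∫₀^t s^{-1/2} ds = 2√t`, which produces the factor `2` in the limit.
-/

open Real Filter Topology MeasureTheory intervalIntegral Asymptotics Set

lemma inv_sqrt_eq_rpow {s : ℝ} (hs : 0 ≤ s) : (√s)⁻¹ = s ^ (-(1 / 2 : ℝ)) := by
  rw [sqrt_eq_rpow, rpow_neg hs]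

lemma intervalIntegrable_inv_sqrt {t : ℝ} (ht : 0 ≤ t) :
    IntervalIntegrable (fun s => (√s)⁻¹) volume 0 t :=
  (intervalIntegrable_rpow' (by norm_num)).congr fun s hs =>
    (inv_sqrt_eq_rpow (by rw [uIoc_of_le ht] at hs; exact hs.1.le)).symm

lemma integral_inv_sqrt {t : ℝ} (ht : 0 ≤ t) : ∫ s in 0..t, (√s)⁻¹ = 2 * √t := by
  rw [integral_congr fun s hs => inv_sqrt_eq_rpow (by rw [uIcc_of_le ht] at hs; exact hs.1),
    integral_rpow (by norm_num), sqrt_eq_rpow]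
  norm_num
  ring

theorem Asymptotics.IsLittleO.intervalIntegral_atTop {E : Type*} [NormedAddCommGroup E]
    [NormedSpace ℝ E] {a : ℝ} {r : ℝ → E} {g : ℝ → ℝ}
    (hr : ∀ t ≥ a, IntervalIntegrable r volume a t)
    (hg : ∀ t ≥ a, IntervalIntegrable g volume a t) (hg_nonneg : ∀ᶠ s in atTop, 0 ≤ g s)
    (hG : Tendsto (fun t => ∫ s in a..t, g s) atTop atTop) (h : r =o[atTop] g) :
    (fun t => ∫ s in a..t, r s) =o[atTop] fun t => ∫ s in a..t, g s := by
  refine IsLittleO.of_bound fun ε hε => ?_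
  obtain ⟨T, hT⟩ := eventually_atTop.mp
    ((h.bound (half_pos hε)).and (hg_nonneg.and (eventually_ge_atTop a)))
  have haT : a ≤ T := (hT T le_rfl).2.2
  set G := fun t => ∫ s in a..t, g s
  set C := ‖∫ s in a..T, r s‖ - ε / 2 * G T with hC
  filter_upwards [eventually_ge_atTop T, hG.eventually_ge_atTop 0,
    hG.eventually_ge_atTop (2 / ε * C)] with t hTt hGt hCt
  have hat : a ≤ t := haT.trans hTt
  have htail : ‖∫ s in T..t, r s‖ ≤ ε / 2 * (G t - G T) := by
    rw [show G t - G T = ∫ s in T..t, g s from integral_interval_sub_left (hg t hat) (hg T haT),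
      ← intervalIntegral.integral_const_mul]
    refine norm_integral_le_of_norm_le hTt (ae_of_all _ fun s hs => ?_)
      (((hg T haT).symm.trans (hg t hat)).const_mul _)
    obtain ⟨hrs, hgs, -⟩ := hT s hs.1.le
    rwa [Real.norm_of_nonneg hgs] at hrs
  calc ‖∫ s in a..t, r s‖
      = ‖(∫ s in a..T, r s) + ∫ s in T..t, r s‖ := by
        rw [integral_add_adjacent_intervals (hr T haT) ((hr T haT).symm.trans (hr t hat))]
    _ ≤ ‖∫ s in a..T, r s‖ + ε / 2 * (G t - G T) := (norm_add_le _ _).trans (by gcongr)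
    _ ≤ ε * ‖G t‖ := by
      rw [Real.norm_of_nonneg hGt]
      rw [div_mul_eq_mul_div, div_le_iff₀ hε] at hCt
      linarith

theorem tendsto_inv_sqrt_mul_integral_of_tendsto_sqrt_mul {f : ℝ → ℝ} {c : ℝ}
    (hf : ∀ t ≥ 0, IntervalIntegrable f volume 0 t)
    (h : Tendsto (fun s => √s * f s) atTop (𝓝 c)) :
    Tendsto (fun t => (√t)⁻¹ * ∫ s in 0..t, f s) atTop (𝓝 (2 * c)) := by
  have hrem : (fun s => f s - c * (√s)⁻¹) =o[atTop] fun s => (√s)⁻¹ := by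
    have h₀ : (fun s => √s * f s - c) =o[atTop] fun _ => (1 : ℝ) :=
      (isLittleO_one_iff ℝ).mpr (by simpa using h.sub_const c)
    refine (h₀.mul_isBigO (isBigO_refl (fun s => (√s)⁻¹) atTop)).congr' ?_ (by simp)
    filter_upwards [eventually_gt_atTop 0] with s hs
    field_simp [(sqrt_pos.mpr hs).ne']
  have hint := hrem.intervalIntegral_atTop
    (fun t ht => (hf t ht).sub ((intervalIntegrable_inv_sqrt ht).const_mul c))
    (fun t ht => intervalIntegrable_inv_sqrt ht) (Eventually.of_forall fun s => by positivity)
    ((tendsto_sqrt_atTop.const_mul_atTop two_pos).congr' <| by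
      filter_upwards [eventually_ge_atTop 0] with t ht using (integral_inv_sqrt ht).symm)
  have hlim := (hint.tendsto_div_nhds_zero.const_mul 2).add_const (2 * c)
  rw [mul_zero, zero_add] at hlim
  refine hlim.congr' ?_
  filter_upwards [eventually_gt_atTop 0] with t ht
  have hst : √t ≠ 0 := (sqrt_pos.mpr ht).ne'
  rw [integral_sub (hf t ht.le) ((intervalIntegrable_inv_sqrt ht.le).const_mul c),
    intervalIntegral.integral_const_mul, integral_inv_sqrt ht.le]
  field_simp
  ring

lemma Real.sin_eq_mul_sinc (x : ℝ) : sin x = x * sinc x := by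
  rcases eq_or_ne x 0 with rfl | hx
  · simp
  · rw [sinc_of_ne_zero hx, mul_div_cancel₀ _ hx]

lemma Real.two_div_pi_le_sinc {x : ℝ} (hx₀ : 0 ≤ x) (hx : x ≤ π / 2) : 2 / π ≤ sinc x := by
  rcases hx₀.eq_or_lt with rfl | hx₀
  · rw [sinc_zero, div_le_one pi_pos]
    linarith [pi_gt_three]
  · rw [sinc_of_ne_zero hx₀.ne', le_div_iff₀ hx₀]
    exact mul_le_sin hx₀.le hx

lemma exp_neg_mul_sq_mul_sinc_sq_le {a u x : ℝ} (ha : 0 ≤ a) (hx₀ : 0 ≤ x) (hx : x ≤ π / 2) :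
    exp (-a * u ^ 2 * sinc x ^ 2) ≤ exp (-(a * (2 / π) ^ 2) * u ^ 2) := by
  have hsinc : (2 / π) ^ 2 ≤ sinc x ^ 2 :=
    pow_le_pow_left₀ (by positivity) (two_div_pi_le_sinc hx₀ hx) 2
  rw [exp_le_exp]
  nlinarith [mul_nonneg ha (sq_nonneg u)]

lemma sqrt_mul_integral_exp_sin_sq_eq {a t : ℝ} (ht : 0 < t) (φ : ℝ → ℝ) :
    √t * ∫ ω in 0..π / 2, exp (-a * t * sin ω ^ 2) * φ ω =
      ∫ u in Ioi 0, (Ioc 0 (π / 2 * √t)).indicator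
        (fun u => exp (-a * u ^ 2 * sinc (u / √t) ^ 2) * φ (u / √t)) u := by
  have hst : √t ≠ 0 := (sqrt_pos.mpr ht).ne'
  have hscale (u : ℝ) : t * sin (u / √t) ^ 2 = u ^ 2 * sinc (u / √t) ^ 2 := by
    rw [sin_eq_mul_sinc, mul_pow, div_pow, sq_sqrt ht.le]
    field_simp
  rw [setIntegral_indicator measurableSet_Ioc, inter_eq_right.mpr Ioc_subset_Ioi_self,
    ← integral_of_le (by positivity)]
  simp_rw [mul_assoc (-a), ← hscale, ← mul_assoc (-a)]
  rw [integral_comp_div (fun ω => exp (-a * t * sin ω ^ 2) * φ ω) hst, zero_div,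
    mul_div_cancel_right₀ _ hst, smul_eq_mul]

theorem tendsto_sqrt_mul_integral_exp_sin_sq {a : ℝ} (ha : 0 < a) {φ : ℝ → ℝ}
    (hφ : Continuous φ) :
    Tendsto (fun t => √t * ∫ ω in 0..π / 2, exp (-a * t * sin ω ^ 2) * φ ω) atTop
      (𝓝 (φ 0 * √(π / a) / 2)) := by
  obtain ⟨M, hM⟩ :=
    isCompact_Icc.exists_bound_of_continuousOn (hφ.continuousOn (s := Icc 0 (π / 2)))
  set F : ℝ → ℝ → ℝ := fun t => (Ioc 0 (π / 2 * √t)).indicator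
    (fun u => exp (-a * u ^ 2 * sinc (u / √t) ^ 2) * φ (u / √t)) with hF
  have hF_meas : ∀ᶠ t in atTop, AEStronglyMeasurable (F t) (volume.restrict (Ioi 0)) :=
    Eventually.of_forall fun t =>
      (Continuous.aestronglyMeasurable (by fun_prop)).indicator measurableSet_Ioc
  have hF_bound : ∀ᶠ t in atTop, ∀ᵐ u ∂(volume.restrict (Ioi 0)),
      ‖F t u‖ ≤ M * exp (-(a * (2 / π) ^ 2) * u ^ 2) := by
    filter_upwards [eventually_gt_atTop 0] with t ht
    refine ae_of_all _ fun u => ?_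
    by_cases hu : u ∈ Ioc 0 (π / 2 * √t)
    · have hst := sqrt_pos.mpr ht
      have hx₀ : 0 ≤ u / √t := div_nonneg hu.1.le hst.le
      have hx : u / √t ≤ π / 2 := (div_le_iff₀ hst).mpr hu.2
      simp only [hF]
      rw [indicator_of_mem hu, norm_mul, Real.norm_of_nonneg (exp_pos _).le, mul_comm M]
      exact mul_le_mul (exp_neg_mul_sq_mul_sinc_sq_le ha.le hx₀ hx) (hM _ ⟨hx₀, hx⟩)
        (norm_nonneg _) (exp_pos _).le
    · simp only [hF, indicator_of_notMem hu, norm_zero]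
      exact mul_nonneg ((norm_nonneg _).trans (hM 0 ⟨le_rfl, by positivity⟩)) (exp_pos _).le
  have hF_lim : ∀ᵐ u ∂(volume.restrict (Ioi 0)),
      Tendsto (fun t => F t u) atTop (𝓝 (exp (-a * u ^ 2) * φ 0)) := by
    refine (ae_restrict_mem measurableSet_Ioi).mono fun u (hu : 0 < u) => ?_
    have hx : Tendsto (fun t => u / √t) atTop (𝓝 0) := by
      simpa [div_eq_mul_inv] using tendsto_sqrt_atTop.inv_tendsto_atTop.const_mul u
    have hcont : Continuous fun x => exp (-a * u ^ 2 * sinc x ^ 2) * φ x := by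
      fun_prop
    have hlim := (hcont.tendsto 0).comp hx
    rw [sinc_zero, one_pow, mul_one] at hlim
    refine hlim.congr' ?_
    filter_upwards [(tendsto_sqrt_atTop.const_mul_atTop pi_div_two_pos).eventually_ge_atTop u]
      with t ht
    simp only [hF]
    rw [indicator_of_mem (show u ∈ Ioc 0 (π / 2 * √t) from ⟨hu, ht⟩)]
    rfl
  have hDCT := MeasureTheory.tendsto_integral_filter_of_dominated_convergence _ hF_meas hF_bound
    ((integrable_exp_neg_mul_sq (by positivity)).const_mul M).integrableOn hF_lim
  rw [MeasureTheory.integral_mul_const, integral_gaussian_Ioi, mul_comm, ← mul_div_assoc] at hDCT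
  refine hDCT.congr' ?_
  filter_upwards [eventually_gt_atTop 0] with t ht
  exact (sqrt_mul_integral_exp_sin_sq_eq ht φ).symm

/-- With `g(ω,t) = (4/π) e^{−8γt sin²ω} cos²ω`, one has
`t^{−1/2} ∫₀^t ∫₀^{π/2} g(ω,s) dω ds → 2/√(2πγ)` as `t → ∞`:
the diffusivity diverges like `√t`. -/
theorem diffusivity_divergence (γ : ℝ) (hγ : 0 < γ) :
    Tendsto (fun t : ℝ => (Real.sqrt t)⁻¹ *
        ∫ s in (0:ℝ)..t,
          ∫ ω in (0:ℝ)..(π / 2), (4 / π) * Real.exp (-8 * γ * s * Real.sin ω ^ 2) * Real.cos ω ^ 2)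
      atTop (nhds (2 / Real.sqrt (2 * π * γ))) := by
  have hlaplace := tendsto_sqrt_mul_integral_exp_sin_sq (a := 8 * γ) (by positivity)
    (φ := fun ω => 4 / π * cos ω ^ 2) (by fun_prop)
  have hcont : Continuous fun s =>
      ∫ ω in (0:ℝ)..(π / 2), (4 / π) * exp (-8 * γ * s * sin ω ^ 2) * cos ω ^ 2 :=
    continuous_parametric_intervalIntegral_of_continuous' (by fun_prop) _ _
  have hconst : 2 * (4 / π * cos 0 ^ 2 * √(π / (8 * γ)) / 2) = 2 / √(2 * π * γ) := by
    have h₁ : π / (8 * γ) = (π / 2) ^ 2 / (2 * π * γ) := by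
      field_simp
      ring
    rw [h₁, sqrt_div (by positivity), sqrt_sq (by positivity), cos_zero]
    field_simp
    ring
  rw [← hconst]
  refine tendsto_inv_sqrt_mul_integral_of_tendsto_sqrt_mul
    (fun t _ => hcont.intervalIntegrable 0 t) (hlaplace.congr fun s => ?_)
  congr 1
  refine integral_congr fun ω _ => ?_
  ring_nf
end

section
/- For z > 0 and γ > 0, set X(ω) = [(2 + z/(2γ))/(1 + e^{2πiω})] · (1 − √(1 − (cos(πω)/(1 + z/(4γ)))²)) for ω ∈ (−1/2, 1/2). Then |X(ω)| < 1 for all such ω. -/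
/-!
Writing `a = 1 + z/(4γ) > 1` and `t = cos(πω)/a ∈ (0, 1)`, the identity
`1 + e^{2iθ} = 2 cos θ · e^{iθ}` gives `|X(ω)| = (1 - √(1 - t²)) / t`, and
`1 - t < √(1 - t²)` because `(1 - t)² < (1 - t)(1 + t)`.
-/

open Real Complex

theorem Complex.one_add_exp_two_mul_I (θ : ℂ) :
    1 + exp (2 * θ * I) = 2 * cos θ * exp (θ * I) := by
  rw [Complex.cos, mul_div_cancel₀ _ two_ne_zero, add_mul, ← Complex.exp_add, ← Complex.exp_add,
    neg_mul, neg_add_cancel, exp_zero, add_comm, ← two_mul, mul_assoc]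

theorem Complex.norm_one_add_exp_two_mul_ofReal_mul_I (θ : ℝ) :
    ‖1 + exp (2 * θ * I)‖ = 2 * |Real.cos θ| := by
  rw [one_add_exp_two_mul_I, norm_mul, norm_exp_ofReal_mul_I, mul_one, ← ofReal_cos, norm_mul,
    Complex.norm_real, Real.norm_eq_abs, Complex.norm_ofNat]

theorem Real.one_sub_sqrt_one_sub_sq_lt {t : ℝ} (ht₀ : 0 < t) (ht₁ : t < 1) :
    1 - √(1 - t ^ 2) < t := by
  have : 1 - t < √(1 - t ^ 2) := Real.lt_sqrt_of_sq_lt (by nlinarith)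
  linarith

/-- For `z, γ > 0`, the geometric ratio
`X(ω) = [(2 + z/(2γ))/(1 + e^{2πiω})] (1 − √(1 − (cos(πω)/(1 + z/(4γ)))²))`
satisfies `|X(ω)| < 1` for all `ω ∈ (−1/2, 1/2)`. -/
theorem geometric_ratio_lt_one (z γ : ℝ) (hz : 0 < z) (hγ : 0 < γ) :
    ∀ ω ∈ Set.Ioo (-(1:ℝ)/2) (1/2),
      ‖((((2 + z / (2 * γ) : ℝ) : ℂ) / (1 + Complex.exp (2 * π * Complex.I * (ω : ℂ)))) *
          ((1 : ℂ) -
            ((Real.sqrt (1 - (Real.cos (π * ω) / (1 + z / (4 * γ))) ^ 2) : ℝ) : ℂ)))‖ < 1 := by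
  rintro ω ⟨hω₁, hω₂⟩
  set a := 1 + z / (4 * γ)
  set t := Real.cos (π * ω) / a
  have ha : 1 < a := lt_add_of_pos_right 1 (by positivity)
  have hcos : 0 < Real.cos (π * ω) :=
    Real.cos_pos_of_mem_Ioo ⟨by nlinarith [pi_pos], by nlinarith [pi_pos]⟩
  have ht₀ : 0 < t := by positivity
  have ht₁ : t < 1 := (div_lt_one (by positivity)).2 ((Real.cos_le_one _).trans_lt ha)
  have hnum : 2 + z / (2 * γ) = 2 * a := by simp only [a]; field_simp; ring
  have hden : ‖1 + exp (2 * π * I * ω)‖ = 2 * Real.cos (π * ω) := by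
    rw [show 2 * π * I * ω = 2 * ((π * ω : ℝ) : ℂ) * I by push_cast; ring,
      norm_one_add_exp_two_mul_ofReal_mul_I, abs_of_pos hcos]
  have hsqrt : √(1 - t ^ 2) ≤ 1 := Real.sqrt_le_one.2 (by linarith [sq_nonneg t])
  calc _ = (1 - √(1 - t ^ 2)) / t := by
        rw [norm_mul, norm_div, hden, hnum, ← ofReal_one, ← ofReal_sub, norm_real, norm_real,
          Real.norm_of_nonneg (by positivity), Real.norm_of_nonneg (sub_nonneg.2 hsqrt)]
        field_simp
        rw [mul_div_cancel₀ _ (zero_lt_one.trans ha).ne']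
    _ < 1 := (div_lt_one ht₀).2 (one_sub_sqrt_one_sub_sq_lt ht₀ ht₁)
end

section
/- Let γ > 0, α > 0 small, and V smooth with sup_r V''(r)/(V'(r))² → 0 as |r| → ∞ and V'' bounded on compacts. For the open-chain generator L = A_N + λ_ℓ B_{−N,T_ℓ} + λ_r B_{N,T_r} with B_{x,T} = T∂²_{η_x} − V'(η_x)∂_{η_x}, the function W_α(η) = exp(α Σ_{x=−N}^N V(η_x)) satisfies L W_α = α[λ_r T_r V''(η_N) + λ_r(T_r α − 1)(V'(η_N))² + λ_ℓ T_ℓ V''(η_{−N}) + λ_ℓ(T_ℓ α − 1)(V'(η_{−N}))²] W_α; in particular, if α < min(1/T_ℓ, 1/T_r), then L W_α ≤ A W_α for some finite constant A. -/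
open MeasureTheory Filter

/-- Partial derivative in the coordinate `j`. -/
noncomputable def pdZ (j : ℤ) (φ : (ℤ → ℝ) → ℝ) (η : ℤ → ℝ) : ℝ :=
  deriv (fun t => φ (Function.update η j t)) (η j)

/-- Second partial derivative in the coordinate `j`. -/
noncomputable def pd2Z (j : ℤ) (φ : (ℤ → ℝ) → ℝ) (η : ℤ → ℝ) : ℝ :=
  deriv (deriv (fun t => φ (Function.update η j t))) (η j)

/-- The finite-volume energy-volume conserving generator `A_N`. -/
noncomputable def AN (V : ℝ → ℝ) (N : ℤ) (f : (ℤ → ℝ) → ℝ) (η : ℤ → ℝ) : ℝ :=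
  (∑ x ∈ Finset.Icc (-N + 1) (N - 1),
      (deriv V (η (x + 1)) - deriv V (η (x - 1))) * pdZ x f η)
    - deriv V (η (N - 1)) * pdZ N f η + deriv V (η (-N + 1)) * pdZ (-N) f η

/-- Thermostat generator `B_{x,T} = T ∂²_{η_x} − V'(η_x) ∂_{η_x}`. -/
noncomputable def BT (V : ℝ → ℝ) (x : ℤ) (T : ℝ) (f : (ℤ → ℝ) → ℝ) (η : ℤ → ℝ) : ℝ :=
  T * pd2Z x f η - deriv V (η x) * pdZ x f η

/-- The open-chain generator `L = A_N + λ_ℓ B_{−N,T_ℓ} + λ_r B_{N,T_r}`. -/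
noncomputable def Lopen (V : ℝ → ℝ) (N : ℤ) (laml lamr Tl Tr : ℝ)
    (f : (ℤ → ℝ) → ℝ) (η : ℤ → ℝ) : ℝ :=
  AN V N f η + laml * BT V (-N) Tl f η + lamr * BT V N Tr f η

lemma pd_W (V : ℝ → ℝ) (hV : ContDiff ℝ (⊤ : ℕ∞) V) (α : ℝ) (N j : ℤ)
    (hj : j ∈ Finset.Icc (-N) N) (η : ℤ → ℝ) :
    pdZ j (fun η => Real.exp (α * ∑ x ∈ Finset.Icc (-N) N, V (η x))) η
      = α * deriv V (η j) * Real.exp (α * ∑ x ∈ Finset.Icc (-N) N, V (η x)) ∧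
    pd2Z j (fun η => Real.exp (α * ∑ x ∈ Finset.Icc (-N) N, V (η x))) η
      = (α * deriv (deriv V) (η j) + (α * deriv V (η j))^2)
          * Real.exp (α * ∑ x ∈ Finset.Icc (-N) N, V (η x)) := by
  set s := Finset.Icc (-N) N with hs
  set C := ∑ x ∈ s \ {j}, V (η x) with hC
  have hsum : ∀ t, ∑ x ∈ s, V (Function.update η j t x) = V t + C := by
    intro t
    have h1 : ∀ x, V (Function.update η j t x)
        = Function.update (fun k => V (η k)) j (V t) x := by
      intro x
      exact (Function.apply_update (fun _ r => V r) η j t x)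
    simp_rw [h1]
    exact Finset.sum_update_of_mem hj _ _
  have hWeq : ∑ x ∈ s, V (η x) = V (η j) + C := by
    have := hsum (η j)
    simpa [Function.update_eq_self] using this
  have hg : ∀ t, HasDerivAt (fun t => Real.exp (α * (V t + C)))
      (α * deriv V t * Real.exp (α * (V t + C))) t := by
    intro t
    have h1 : HasDerivAt (fun t => α * (V t + C)) (α * deriv V t) t :=
      (((hV.differentiable (by simp) t).hasDerivAt).add_const C).const_mul α
    have h2 := h1.exp
    convert h2 using 1
    ring
  have hfun : (fun t => Real.exp (α * ∑ x ∈ s, V (Function.update η j t x)))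
      = fun t => Real.exp (α * (V t + C)) := funext fun t => by rw [hsum]
  constructor
  · show deriv (fun t => Real.exp (α * ∑ x ∈ s, V (Function.update η j t x))) (η j) = _
    rw [hfun, (hg (η j)).deriv, hWeq]
  · show deriv (deriv (fun t => Real.exp (α * ∑ x ∈ s, V (Function.update η j t x)))) (η j) = _
    rw [hfun]
    have hd : deriv (fun t => Real.exp (α * (V t + C)))
        = fun t => (α * deriv V t) * Real.exp (α * (V t + C)) :=
      funext fun t => (hg t).deriv
    rw [hd]
    have hV' : ContDiff ℝ (⊤ : ℕ∞) (deriv V) := (contDiff_infty_iff_deriv.mp (hV.of_le (by simp))).2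
    have h2 : HasDerivAt (fun t => α * deriv V t) (α * deriv (deriv V) (η j)) (η j) :=
      ((hV'.differentiable (by norm_num) (η j)).hasDerivAt).const_mul α
    have h3 := h2.mul (hg (η j))
    rw [HasDerivAt.deriv (f := fun t => α * deriv V t * Real.exp (α * (V t + C))) h3, hWeq]
    ring

lemma tele (h : ℤ → ℝ) (a b : ℤ) (hab : a ≤ b) :
    ∑ x ∈ Finset.Icc a b, h x - ∑ x ∈ Finset.Icc a b, h (x - 1) = h b - h (a - 1) := by
  have e0 : ∑ x ∈ Finset.Icc a b, h (x - 1) = ∑ x ∈ Finset.Icc (a - 1) (b - 1), h x := by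
    rw [show Finset.Icc (a-1) (b-1) = (Finset.Icc a b).map (addRightEmbedding (-1)) by
      rw [Finset.map_add_right_Icc]; ring_nf, Finset.sum_map]
    simp [addRightEmbedding, sub_eq_add_neg]
  have e1 : Finset.Icc (a - 1) b = insert (a - 1) (Finset.Icc a b) := by
    ext x; simp [Finset.mem_Icc]; omega
  have e2 : Finset.Icc (a - 1) b = insert b (Finset.Icc (a - 1) (b - 1)) := by
    ext x; simp [Finset.mem_Icc]; omega
  have n1 : (a - 1) ∉ Finset.Icc a b := by simp [Finset.mem_Icc]
  have n2 : b ∉ Finset.Icc (a - 1) (b - 1) := by simp [Finset.mem_Icc]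
  rw [e0]
  have h1 : ∑ x ∈ Finset.Icc (a-1) b, h x = h (a-1) + ∑ x ∈ Finset.Icc a b, h x := by
    rw [e1, Finset.sum_insert n1]
  have h2 : ∑ x ∈ Finset.Icc (a-1) b, h x = h b + ∑ x ∈ Finset.Icc (a-1) (b-1), h x := by
    rw [e2, Finset.sum_insert n2]
  linarith

lemma bound_one (V : ℝ → ℝ) (hV : ContDiff ℝ (⊤ : ℕ∞) V)
    (hVinf : Tendsto (fun r => deriv (deriv V) r / (deriv V r) ^ 2) (cocompact ℝ) (nhds 0))
    (T α : ℝ) (hT : 0 < T) (hc : T * α < 1) :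
    ∃ M : ℝ, ∀ r : ℝ, T * deriv (deriv V) r + (T * α - 1) * (deriv V r) ^ 2 ≤ M := by
  set D := deriv V with hD
  set D2 := deriv (deriv V) with hD2
  have hV' : ContDiff ℝ (⊤ : ℕ∞) (deriv V) := (contDiff_infty_iff_deriv.mp (hV.of_le (by simp))).2
  have hDc : Continuous D := hV'.continuous
  have hD2c : Continuous D2 := (contDiff_infty_iff_deriv.mp hV').2.continuous
  set ε := (1 - T * α) / T with hε
  have hεpos : 0 < ε := div_pos (by linarith) hT
  have hev := hVinf (Metric.ball_mem_nhds (0 : ℝ) hεpos)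
  rw [mem_map, mem_cocompact] at hev
  obtain ⟨K, hK, hKsub⟩ := hev
  have hout : ∀ r ∉ K, |D2 r / (D r) ^ 2| < ε := by
    intro r hr
    have h0 : D2 r / (D r) ^ 2 ∈ Metric.ball (0:ℝ) ε := hKsub hr
    rw [Metric.mem_ball, dist_zero_right, Real.norm_eq_abs] at h0
    exact h0
  have hzero : ∀ r ∉ K, D r = 0 → D2 r = 0 := by
    intro r hr hDr
    by_contra hne
    have hKc : Kᶜ ∈ nhds r := hK.isClosed.isOpen_compl.mem_nhds hr
    have hd : HasDerivAt D (D2 r) r := (hV'.differentiable (by norm_num) r).hasDerivAt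
    have hslope := hasDerivAt_iff_tendsto_slope.mp hd
    have hne' : ∀ᶠ s in nhdsWithin r {r}ᶜ, slope D r s ≠ 0 := hslope.eventually_ne hne
    have hmem : ∀ᶠ s in nhdsWithin r {r}ᶜ, s ∈ Kᶜ :=
      eventually_nhdsWithin_of_eventually_nhds hKc
    have hineq : ∀ᶠ s in nhdsWithin r {r}ᶜ, |D2 s| ≤ ε * (D s) ^ 2 := by
      filter_upwards [hne', hmem, self_mem_nhdsWithin] with s hs1 hs2 hs3
      have hDs : D s ≠ 0 := by
        intro h0
        apply hs1
        rw [slope_def_field, h0, hDr]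
        simp
      have h1 := hout s hs2
      have h2 : (D s) ^ 2 > 0 := by positivity
      rw [abs_div, abs_of_pos h2] at h1
      rw [div_lt_iff₀ h2] at h1
      exact h1.le
    have ht1 : Tendsto (fun s => |D2 s|) (nhdsWithin r {r}ᶜ) (nhds |D2 r|) :=
      ((hD2c.abs.tendsto r).mono_left nhdsWithin_le_nhds)
    have ht2 : Tendsto (fun s => ε * (D s) ^ 2) (nhdsWithin r {r}ᶜ) (nhds 0) := by
      have : Tendsto (fun s => ε * (D s) ^ 2) (nhds r) (nhds (ε * (D r) ^ 2)) :=
        (continuous_const.mul (hDc.pow 2)).tendsto r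
      rw [hDr] at this
      simpa using this.mono_left nhdsWithin_le_nhds
    have hle := le_of_tendsto_of_tendsto ht1 ht2 hineq
    exact hne (abs_nonpos_iff.mp hle)
  set F := fun r => T * D2 r + (T * α - 1) * (D r) ^ 2 with hF
  have hFc : Continuous F := (continuous_const.mul hD2c).add (continuous_const.mul (hDc.pow 2))
  obtain ⟨M0, hM0⟩ := (hK.image hFc).bddAbove
  refine ⟨max M0 0, fun r => ?_⟩
  show F r ≤ max M0 0
  by_cases hr : r ∈ K
  · exact le_trans (hM0 (Set.mem_image_of_mem F hr)) (le_max_left _ _)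
  · refine le_trans ?_ (le_max_right _ _)
    by_cases hDr : D r = 0
    · have h0 := hzero r hr hDr
      simp [hF, hDr, h0]
    · have h1 := hout r hr
      have hpos : (0:ℝ) < (D r) ^ 2 := by positivity
      rw [abs_div, abs_of_pos hpos, div_lt_iff₀ hpos] at h1
      have h2 : D2 r ≤ ε * (D r) ^ 2 := le_trans (le_abs_self _) h1.le
      have hεT : T * ε = 1 - T * α := by rw [hε]; field_simp
      have h3 : T * D2 r ≤ T * (ε * (D r) ^ 2) := by nlinarith
      show T * D2 r + (T * α - 1) * (D r) ^ 2 ≤ 0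
      nlinarith

/-- Lyapunov estimate: `L W_α = α[⋯]W_α`, and if `α < min(1/T_ℓ, 1/T_r)` then
`L W_α ≤ A W_α` for some finite constant `A`. -/
theorem lyapunov_estimate (V : ℝ → ℝ) (N : ℤ) (hN : 1 ≤ N)
    (γ α laml lamr Tl Tr : ℝ)
    (hγ : 0 < γ) (hα : 0 < α) (hlaml : 0 < laml) (hlamr : 0 < lamr)
    (hTl : 0 < Tl) (hTr : 0 < Tr)
    (hV : ContDiff ℝ (⊤ : ℕ∞) V)
    (hVinf : Tendsto (fun r => deriv (deriv V) r / (deriv V r) ^ 2) (cocompact ℝ) (nhds 0)) :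
    (∀ η : ℤ → ℝ,
      Lopen V N laml lamr Tl Tr
          (fun η => Real.exp (α * ∑ x ∈ Finset.Icc (-N) N, V (η x))) η
        = α * (lamr * Tr * deriv (deriv V) (η N)
            + lamr * (Tr * α - 1) * (deriv V (η N)) ^ 2
            + laml * Tl * deriv (deriv V) (η (-N))
            + laml * (Tl * α - 1) * (deriv V (η (-N))) ^ 2)
          * Real.exp (α * ∑ x ∈ Finset.Icc (-N) N, V (η x))) ∧
    (α < min (1 / Tl) (1 / Tr) →
      ∃ A : ℝ, ∀ η : ℤ → ℝ,
        Lopen V N laml lamr Tl Tr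
            (fun η => Real.exp (α * ∑ x ∈ Finset.Icc (-N) N, V (η x))) η
          ≤ A * Real.exp (α * ∑ x ∈ Finset.Icc (-N) N, V (η x))) := by
  have memN : N ∈ Finset.Icc (-N) N := by simp [Finset.mem_Icc]; omega
  have memnN : -N ∈ Finset.Icc (-N) N := by simp [Finset.mem_Icc]; omega
  have main : ∀ η : ℤ → ℝ,
      Lopen V N laml lamr Tl Tr
          (fun η => Real.exp (α * ∑ x ∈ Finset.Icc (-N) N, V (η x))) η
        = α * (lamr * Tr * deriv (deriv V) (η N)
            + lamr * (Tr * α - 1) * (deriv V (η N)) ^ 2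
            + laml * Tl * deriv (deriv V) (η (-N))
            + laml * (Tl * α - 1) * (deriv V (η (-N))) ^ 2)
          * Real.exp (α * ∑ x ∈ Finset.Icc (-N) N, V (η x)) := by
    intro η
    set W := Real.exp (α * ∑ x ∈ Finset.Icc (-N) N, V (η x)) with hW
    set D := deriv V with hD
    set D2 := deriv (deriv V) with hD2
    unfold Lopen AN BT
    rw [(pd_W V hV α N N memN η).1, (pd_W V hV α N N memN η).2,
       (pd_W V hV α N (-N) memnN η).1, (pd_W V hV α N (-N) memnN η).2]
    have hsum : ∑ x ∈ Finset.Icc (-N+1) (N-1),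
        (D (η (x + 1)) - D (η (x - 1))) * pdZ x
          (fun η => Real.exp (α * ∑ x ∈ Finset.Icc (-N) N, V (η x))) η
        = (∑ x ∈ Finset.Icc (-N+1) (N-1), (D (η (x + 1)) - D (η (x - 1))) * D (η x)) * (α * W)
        := by
      rw [Finset.sum_mul]
      refine Finset.sum_congr rfl fun x hx => ?_
      have hxm : x ∈ Finset.Icc (-N) N := by
        simp [Finset.mem_Icc] at hx ⊢; omega
      rw [(pd_W V hV α N x hxm η).1]
      ring
    rw [hsum]
    have htel : ∑ x ∈ Finset.Icc (-N+1) (N-1), (D (η (x + 1)) - D (η (x - 1))) * D (η x)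
        = D (η N) * D (η (N-1)) - D (η (-N+1)) * D (η (-N)) := by
      have step : ∀ x : ℤ, (D (η (x + 1)) - D (η (x - 1))) * D (η x)
          = (fun y => D (η (y + 1)) * D (η y)) x - (fun y => D (η (y + 1)) * D (η y)) (x - 1) := by
        intro x
        have : x - 1 + 1 = x := by ring
        simp only [this]
        ring
      calc ∑ x ∈ Finset.Icc (-N+1) (N-1), (D (η (x + 1)) - D (η (x - 1))) * D (η x)
          = ∑ x ∈ Finset.Icc (-N+1) (N-1),
              ((fun y => D (η (y + 1)) * D (η y)) x - (fun y => D (η (y + 1)) * D (η y)) (x - 1))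
            := Finset.sum_congr rfl fun x _ => step x
        _ = (fun y => D (η (y + 1)) * D (η y)) (N - 1)
              - (fun y => D (η (y + 1)) * D (η y)) (-N + 1 - 1) := by
            rw [Finset.sum_sub_distrib]
            exact tele _ _ _ (by omega)
        _ = D (η N) * D (η (N-1)) - D (η (-N+1)) * D (η (-N)) := by
            have e1 : (N : ℤ) - 1 + 1 = N := by ring
            have e2 : (-N : ℤ) + 1 - 1 = -N := by ring
            have e3 : (-N : ℤ) + 1 - 1 + 1 = -N + 1 := by ring
            simp only [e1, e2, e3]
    rw [htel]
    ring
  refine ⟨main, fun hmin => ?_⟩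
  have h1 : Tl * α < 1 := by
    have := lt_of_lt_of_le hmin (min_le_left _ _)
    rw [lt_div_iff₀ hTl] at this
    linarith
  have h2 : Tr * α < 1 := by
    have := lt_of_lt_of_le hmin (min_le_right _ _)
    rw [lt_div_iff₀ hTr] at this
    linarith
  obtain ⟨Mr, hMr⟩ := bound_one V hV hVinf Tr α hTr h2
  obtain ⟨Ml, hMl⟩ := bound_one V hV hVinf Tl α hTl h1
  refine ⟨α * (lamr * Mr + laml * Ml), fun η => ?_⟩
  rw [main η]
  apply mul_le_mul_of_nonneg_right _ (Real.exp_pos _).le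
  have hr := hMr (η N)
  have hl := hMl (η (-N))
  have hbr := mul_le_mul_of_nonneg_left hr hlamr.le
  have hbl := mul_le_mul_of_nonneg_left hl hlaml.le
  apply mul_le_mul_of_nonneg_left _ hα.le
  nlinarith
end
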